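/- arXiv:2105.11779 — 2 statements merged into one kernel-verified Lean document; each statement's English description precedes it below -/
import Mathlib

section
/- Let ξ ∈ ℚ_p. There do not exist two linearly independent integer pairs (x₁,y₁) and (x₂,y₂) which, setting X_i = max(|x_i|,|y_i|) for i = 1,2, satisfy |y_i ξ − x_i|_p < (1/2)·X₁^{−1}·X₂^{−1} for i = 1,2. In particular, for any real number X > 1, the system max(|x|,|y|) ≤ X, |yξ − x|_p < (1/2)·X^{−2} does not have two linearly independent integer solutions (x,y). -/
open Filter MeasureTheory
open scoped ENNReal

/-- A `p`-adic number is irrational if it is not the image of a rational number. -/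
def PadicIrrational (p : ℕ) [Fact p.Prime] (ξ : ℚ_[p]) : Prop :=
  ∀ q : ℚ, (q : ℚ_[p]) ≠ ξ

/-- The irrationality exponent `μ(ξ)` of a `p`-adic number `ξ`: the supremum (in `[0,∞]`)
of the real numbers `m` such that `0 < |yξ - x|_p ≤ max(|x|,|y|)^(-m)` has infinitely many
solutions in nonzero integers `x, y`. -/
noncomputable def muExp (p : ℕ) [Fact p.Prime] (ξ : ℚ_[p]) : ℝ≥0∞ :=
  sSup (ENNReal.ofReal '' {m : ℝ |
    {q : ℤ × ℤ | q.1 ≠ 0 ∧ q.2 ≠ 0 ∧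
      0 < ‖(q.2 : ℚ_[p]) * ξ - (q.1 : ℚ_[p])‖ ∧
      ‖(q.2 : ℚ_[p]) * ξ - (q.1 : ℚ_[p])‖ ≤ (max |(q.1 : ℝ)| |(q.2 : ℝ)|) ^ (-m)}.Infinite})

/-- The multiplicative irrationality exponent `μ×(ξ)`: the supremum of the real numbers `m`
such that `0 < |yξ - x|_p ≤ (|xy|^(1/2))^(-m)` has infinitely many solutions in nonzero
integers `x, y`. -/
noncomputable def muTimesExp (p : ℕ) [Fact p.Prime] (ξ : ℚ_[p]) : ℝ≥0∞ :=
  sSup (ENNReal.ofReal '' {m : ℝ |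
    {q : ℤ × ℤ | q.1 ≠ 0 ∧ q.2 ≠ 0 ∧
      0 < ‖(q.2 : ℚ_[p]) * ξ - (q.1 : ℚ_[p])‖ ∧
      ‖(q.2 : ℚ_[p]) * ξ - (q.1 : ℚ_[p])‖ ≤ (Real.sqrt |(q.1 : ℝ) * (q.2 : ℝ)|) ^ (-m)}.Infinite})

/-- The uniform irrationality exponent `μ̂(ξ)`: the supremum of the real numbers `m` such that
for every sufficiently large real `X` the system
`0 < max(|x|,|y|) ≤ X`, `|yξ - x|_p ≤ X^(-m)` has an integer solution. -/
noncomputable def muHatExp (p : ℕ) [Fact p.Prime] (ξ : ℚ_[p]) : ℝ≥0∞ :=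
  sSup (ENNReal.ofReal '' {m : ℝ | ∀ᶠ X : ℝ in atTop, ∃ x y : ℤ,
    0 < max |(x : ℝ)| |(y : ℝ)| ∧ max |(x : ℝ)| |(y : ℝ)| ≤ X ∧
    ‖(y : ℚ_[p]) * ξ - (x : ℚ_[p])‖ ≤ X ^ (-m)})

/-- The uniform multiplicative irrationality exponent `μ̂×(ξ)`: the supremum of the real
numbers `m` such that for every sufficiently large real `X` the system
`0 < |xy|^(1/2) ≤ X`, `|yξ - x|_p ≤ X^(-m)` has an integer solution. -/
noncomputable def muHatTimesExp (p : ℕ) [Fact p.Prime] (ξ : ℚ_[p]) : ℝ≥0∞ :=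
  sSup (ENNReal.ofReal '' {m : ℝ | ∀ᶠ X : ℝ in atTop, ∃ x y : ℤ,
    0 < Real.sqrt |(x : ℝ) * (y : ℝ)| ∧ Real.sqrt |(x : ℝ) * (y : ℝ)| ≤ X ∧
    ‖(y : ℚ_[p]) * ξ - (x : ℚ_[p])‖ ≤ X ^ (-m)})

/-!
If `D = x₁y₂ - x₂y₁ ≠ 0`, then `D = y₁(y₂ξ - x₂) - y₂(y₁ξ - x₁)` has p-adic norm at most the larger
approximation error, while `|D| ≤ 2X₁X₂` in the real absolute value. The product formula for the
nonzero integer `D`, in the form `1 ≤ |D|·|D|_p`, then contradicts `|yᵢξ - xᵢ|_p < (2X₁X₂)⁻¹`.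
-/

theorem abs_mul_sub_mul_le_two_mul_max_abs {α : Type*} [CommRing α] [LinearOrder α]
    [IsStrictOrderedRing α] (a b c d : α) :
    |a * d - c * b| ≤ 2 * (max |a| |b| * max |c| |d|) := by
  have had : |a| * |d| ≤ max |a| |b| * max |c| |d| :=
    mul_le_mul (le_max_left _ _) (le_max_right _ _) (abs_nonneg _)
      (le_max_of_le_left (abs_nonneg _))
  have hcb : |c| * |b| ≤ max |c| |d| * max |a| |b| :=
    mul_le_mul (le_max_left _ _) (le_max_right _ _) (abs_nonneg _)
      (le_max_of_le_left (abs_nonneg _))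
  calc |a * d - c * b| ≤ |a * d| + |c * b| := abs_sub _ _
    _ = |a| * |d| + |c| * |b| := by rw [abs_mul, abs_mul]
    _ ≤ 2 * (max |a| |b| * max |c| |d|) := by linarith

namespace Padic

variable {p : ℕ} [Fact p.Prime]

theorem one_le_abs_mul_norm_intCast {n : ℤ} (hn : n ≠ 0) : 1 ≤ |(n : ℝ)| * ‖(n : ℚ_[p])‖ := by
  set v := padicValInt p n
  have hp : (0 : ℝ) < p := by exact_mod_cast (Fact.out : p.Prime).pos
  have hnorm : ‖(n : ℚ_[p])‖ = (p : ℝ) ^ (-(v : ℤ)) := by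
    rw [← Rat.cast_intCast, eq_padicNorm, padicNorm.eq_zpow_of_nonzero (by exact_mod_cast hn),
      padicValRat.of_int]
    push_cast
    rfl
  have hpow : (p : ℝ) ^ v ≤ |(n : ℝ)| := by
    rw [← Int.cast_abs]
    exact_mod_cast Int.le_of_dvd (abs_pos.mpr hn) ((dvd_abs _ _).mpr (padicValInt_dvd n))
  calc (1 : ℝ) = (p : ℝ) ^ v * (p : ℝ) ^ (-(v : ℤ)) := by
        rw [zpow_neg, zpow_natCast, mul_inv_cancel₀ (pow_pos hp v).ne']
    _ ≤ |(n : ℝ)| * ‖(n : ℚ_[p])‖ := by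
        rw [hnorm]
        gcongr

theorem norm_intCast_mul_le (n : ℤ) (z : ℚ_[p]) : ‖(n : ℚ_[p]) * z‖ ≤ ‖z‖ := by
  rw [norm_mul]
  exact mul_le_of_le_one_left (norm_nonneg _) (norm_int_le_one n)

theorem norm_intCast_mul_sub_mul_le_max (ξ : ℚ_[p]) (x₁ y₁ x₂ y₂ : ℤ) :
    ‖((x₁ * y₂ - x₂ * y₁ : ℤ) : ℚ_[p])‖
      ≤ max ‖(y₁ : ℚ_[p]) * ξ - (x₁ : ℚ_[p])‖ ‖(y₂ : ℚ_[p]) * ξ - (x₂ : ℚ_[p])‖ := by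
  have hD : ((x₁ * y₂ - x₂ * y₁ : ℤ) : ℚ_[p]) =
      ((-y₂ : ℤ) : ℚ_[p]) * ((y₁ : ℚ_[p]) * ξ - x₁) +
        (y₁ : ℚ_[p]) * ((y₂ : ℚ_[p]) * ξ - x₂) := by
    push_cast
    ring
  rw [hD]
  exact (IsUltrametricDist.norm_add_le_max _ _).trans
    (max_le_max (norm_intCast_mul_le _ _) (norm_intCast_mul_le _ _))

theorem mul_sub_mul_eq_zero_of_norm_lt (ξ : ℚ_[p]) {x₁ y₁ x₂ y₂ : ℤ} {B : ℝ}
    (hB : max |(x₁ : ℝ)| |(y₁ : ℝ)| * max |(x₂ : ℝ)| |(y₂ : ℝ)| ≤ B)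
    (h₁ : ‖(y₁ : ℚ_[p]) * ξ - (x₁ : ℚ_[p])‖ < (2 * B)⁻¹)
    (h₂ : ‖(y₂ : ℚ_[p]) * ξ - (x₂ : ℚ_[p])‖ < (2 * B)⁻¹) :
    x₁ * y₂ - x₂ * y₁ = 0 := by
  by_contra hD
  have hpadic : ‖((x₁ * y₂ - x₂ * y₁ : ℤ) : ℚ_[p])‖ < (2 * B)⁻¹ :=
    (norm_intCast_mul_sub_mul_le_max ξ x₁ y₁ x₂ y₂).trans_lt (max_lt h₁ h₂)
  have hB0 : 0 < 2 * B := inv_pos.mp ((norm_nonneg _).trans_lt hpadic)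
  have hreal : |((x₁ * y₂ - x₂ * y₁ : ℤ) : ℝ)| ≤ 2 * B := by
    push_cast
    linarith [abs_mul_sub_mul_le_two_mul_max_abs (x₁ : ℝ) y₁ x₂ y₂]
  refine lt_irrefl (1 : ℝ) ?_
  calc (1 : ℝ) ≤ |((x₁ * y₂ - x₂ * y₁ : ℤ) : ℝ)| * ‖((x₁ * y₂ - x₂ * y₁ : ℤ) : ℚ_[p])‖ :=
        one_le_abs_mul_norm_intCast hD
    _ < 2 * B * (2 * B)⁻¹ := mul_lt_mul' hreal hpadic (norm_nonneg _) hB0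
    _ = 1 := mul_inv_cancel₀ hB0.ne'

end Padic

/-- There are no two linearly independent integer pairs `(x₁,y₁)`, `(x₂,y₂)` with
`|yᵢξ - xᵢ|_p < (1/2)·X₁⁻¹·X₂⁻¹` for `i = 1, 2`, where `Xᵢ = max(|xᵢ|,|yᵢ|)`.
In particular, for `X > 1` the system `max(|x|,|y|) ≤ X`, `|yξ - x|_p < (1/2)·X⁻²`
has no two linearly independent integer solutions. -/
theorem statement9 (p : ℕ) [Fact p.Prime] (ξ : ℚ_[p]) :
    (¬ ∃ x₁ y₁ x₂ y₂ : ℤ, x₁ * y₂ - x₂ * y₁ ≠ 0 ∧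
      ‖(y₁ : ℚ_[p]) * ξ - (x₁ : ℚ_[p])‖
        < 1 / 2 * (max |(x₁ : ℝ)| |(y₁ : ℝ)|)⁻¹ * (max |(x₂ : ℝ)| |(y₂ : ℝ)|)⁻¹ ∧
      ‖(y₂ : ℚ_[p]) * ξ - (x₂ : ℚ_[p])‖
        < 1 / 2 * (max |(x₁ : ℝ)| |(y₁ : ℝ)|)⁻¹ * (max |(x₂ : ℝ)| |(y₂ : ℝ)|)⁻¹) ∧
    (∀ X : ℝ, 1 < X → ¬ ∃ x₁ y₁ x₂ y₂ : ℤ, x₁ * y₂ - x₂ * y₁ ≠ 0 ∧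
      max |(x₁ : ℝ)| |(y₁ : ℝ)| ≤ X ∧ max |(x₂ : ℝ)| |(y₂ : ℝ)| ≤ X ∧
      ‖(y₁ : ℚ_[p]) * ξ - (x₁ : ℚ_[p])‖ < 1 / 2 * X ^ (-2 : ℤ) ∧
      ‖(y₂ : ℚ_[p]) * ξ - (x₂ : ℚ_[p])‖ < 1 / 2 * X ^ (-2 : ℤ)) := by
  refine ⟨?_, fun X hX => ?_⟩
  · rintro ⟨x₁, y₁, x₂, y₂, hD, h₁, h₂⟩
    have hbound : 1 / 2 * (max |(x₁ : ℝ)| |(y₁ : ℝ)|)⁻¹ * (max |(x₂ : ℝ)| |(y₂ : ℝ)|)⁻¹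
        = (2 * (max |(x₁ : ℝ)| |(y₁ : ℝ)| * max |(x₂ : ℝ)| |(y₂ : ℝ)|))⁻¹ := by ring
    rw [hbound] at h₁ h₂
    exact hD (Padic.mul_sub_mul_eq_zero_of_norm_lt ξ le_rfl h₁ h₂)
  · rintro ⟨x₁, y₁, x₂, y₂, hD, hX₁, hX₂, h₁, h₂⟩
    have hB : max |(x₁ : ℝ)| |(y₁ : ℝ)| * max |(x₂ : ℝ)| |(y₂ : ℝ)| ≤ X * X :=
      mul_le_mul hX₁ hX₂ (le_max_of_le_left (abs_nonneg _)) (by linarith)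
    have hX : 1 / 2 * X ^ (-2 : ℤ) = (2 * (X * X))⁻¹ := by
      rw [zpow_neg, zpow_two]
      ring
    rw [hX] at h₁ h₂
    exact hD (Padic.mul_sub_mul_eq_zero_of_norm_lt ξ hB h₁ h₂)
end

section
/- Let ξ ∈ ℚ_p be irrational and let ((x_k×, y_k×))_{k≥1} be a sequence of multiplicative best approximations to ξ. Assume that at least one of the following holds: (i) there exists c > 0 such that for infinitely many k one has |x_k×| ≥ c·|y_k×| and |x_{k+1}×| ≥ c·|y_{k+1}×|; (ii) there exists c > 0 such that for infinitely many k one has |x_k×| ≤ c·|y_k×| and |x_{k+1}×| ≤ c·|y_{k+1}×|. Then μ̂×(ξ) ≤ 3. -/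
open Filter MeasureTheory
open scoped ENNReal

/-!
Suppose `μ̂×(ξ) > m > 3`. For a large index `K` at which `(x_K, y_K)` and `(x_{K+1}, y_{K+1})`
are balanced in the same direction, the uniform exponent at `X = Q_{K+1} / 2` yields a coprime
pair `(a, b)` with `N = |ab|^{1/2} ≤ X` and error `ε` satisfying `N ε ≤ X^{1-m}`; being a best
approximation, `(x_K, y_K)` has error at most `ε`, and so does `(x_{K+1}, y_{K+1})`. Any two of
these three pairs either have the same size or an integer determinant of `p`-adic norm at most
`ε`, hence of absolute value at least `1 / ε`. Bounding the three determinants by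
`|x||y'| + |x'||y|` and using the balance gives `σ ≤ 2 N ε Q_{K+1}^2` for some `σ > 0` depending
only on the balance constant, so `σ ≤ 8 X^{3-m}`, which fails for large `X`.
-/

namespace Padic
variable {p : ℕ} [Fact p.Prime]

theorem one_le_norm_intCast_mul_abs {k : ℤ} (hk : k ≠ 0) :
    1 ≤ ‖(k : ℚ_[p])‖ * |(k : ℝ)| := by
  have hp : (0 : ℝ) < p := by exact_mod_cast (Fact.out : p.Prime).pos
  have hnorm : ‖(k : ℚ_[p])‖ = ((p : ℝ) ^ padicValInt p k)⁻¹ := by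
    rw [← Rat.cast_intCast, eq_padicNorm, padicNorm.eq_zpow_of_nonzero (by exact_mod_cast hk),
      padicValRat.of_int]
    push_cast
    rw [zpow_neg, zpow_natCast]
  have hle : (p : ℝ) ^ padicValInt p k ≤ |(k : ℝ)| := by
    exact_mod_cast Int.le_of_dvd (abs_pos.mpr hk) ((dvd_abs _ _).mpr (padicValInt_dvd k))
  rw [hnorm, inv_mul_eq_div, one_le_div (by positivity)]
  exact hle

end Padic

theorem IsCoprime.abs_mul_eq_of_mul_eq_mul {a₁ b₁ a₂ b₂ : ℤ} (h₁ : IsCoprime a₁ b₁)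
    (h₂ : IsCoprime a₂ b₂) (h : a₁ * b₂ = a₂ * b₁) : |a₁ * b₁| = |a₂ * b₂| := by
  have ha : a₁.natAbs = a₂.natAbs := Int.natAbs_eq_of_dvd_dvd
    (h₁.dvd_of_dvd_mul_right ⟨b₂, h.symm⟩) (h₂.dvd_of_dvd_mul_right ⟨b₁, h⟩)
  have hb : b₁.natAbs = b₂.natAbs := Int.natAbs_eq_of_dvd_dvd
    (h₁.symm.dvd_of_dvd_mul_right ⟨a₂, by rw [mul_comm, h, mul_comm]⟩)
    (h₂.symm.dvd_of_dvd_mul_right ⟨a₁, by rw [mul_comm, ← h, mul_comm]⟩)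
  rw [Int.abs_eq_natAbs, Int.abs_eq_natAbs, Int.natAbs_mul, Int.natAbs_mul, ha, hb]

noncomputable def padicErr {p : ℕ} [Fact p.Prime] (ξ : ℚ_[p]) (a b : ℤ) : ℝ :=
  ‖(b : ℚ_[p]) * ξ - a‖

section Approximation
variable {p : ℕ} [Fact p.Prime] (ξ : ℚ_[p])

theorem norm_intCast_det_le_max_padicErr (a₁ b₁ a₂ b₂ : ℤ) :
    ‖((a₁ * b₂ - a₂ * b₁ : ℤ) : ℚ_[p])‖ ≤ max (padicErr ξ a₁ b₁) (padicErr ξ a₂ b₂) := by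
  have hdet : ((a₁ * b₂ - a₂ * b₁ : ℤ) : ℚ_[p])
      = (b₁ : ℚ_[p]) * ((b₂ : ℚ_[p]) * ξ - a₂) + (-(b₂ : ℚ_[p])) * ((b₁ : ℚ_[p]) * ξ - a₁) := by
    push_cast; ring_nf
  have hint (b : ℤ) (z : ℚ_[p]) : ‖(b : ℚ_[p]) * z‖ ≤ ‖z‖ := by
    rw [norm_mul]; exact mul_le_of_le_one_left (norm_nonneg z) (Padic.norm_int_le_one b)
  rw [hdet, max_comm]
  refine (IsUltrametricDist.norm_add_le_max _ _).trans (max_le_max (hint _ _) ?_)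
  rw [← Int.cast_neg]
  exact hint _ _

/-- The determinant `a₁ b₂ - a₂ b₁` has `p`-adic norm at most `ε`: if it is nonzero, the product
formula makes its absolute value at least `1 / ε`; if it vanishes, coprimality makes the two
pairs agree up to signs. -/
theorem one_le_mul_cross_or_sqrt_eq {ε : ℝ} {a₁ b₁ a₂ b₂ : ℤ} (h₁ : IsCoprime a₁ b₁)
    (h₂ : IsCoprime a₂ b₂) (he₁ : padicErr ξ a₁ b₁ ≤ ε) (he₂ : padicErr ξ a₂ b₂ ≤ ε) :
    1 ≤ ε * (|(a₁ : ℝ)| * |(b₂ : ℝ)| + |(a₂ : ℝ)| * |(b₁ : ℝ)|) ∨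
      √|(a₁ : ℝ) * b₁| = √|(a₂ : ℝ) * b₂| := by
  rcases eq_or_ne (a₁ * b₂ - a₂ * b₁) 0 with hdet | hdet
  · right
    have hR : |(a₁ : ℝ) * b₁| = |(a₂ : ℝ) * b₂| := by
      exact_mod_cast h₁.abs_mul_eq_of_mul_eq_mul h₂ (sub_eq_zero.mp hdet)
    rw [hR]
  · left
    have hnorm : ‖((a₁ * b₂ - a₂ * b₁ : ℤ) : ℚ_[p])‖ ≤ ε :=
      (norm_intCast_det_le_max_padicErr ξ a₁ b₁ a₂ b₂).trans (max_le he₁ he₂)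
    have hcross : |((a₁ * b₂ - a₂ * b₁ : ℤ) : ℝ)|
        ≤ |(a₁ : ℝ)| * |(b₂ : ℝ)| + |(a₂ : ℝ)| * |(b₁ : ℝ)| := by
      push_cast
      rw [← abs_mul, ← abs_mul]
      exact abs_sub _ _
    calc 1 ≤ ‖((a₁ * b₂ - a₂ * b₁ : ℤ) : ℚ_[p])‖ * |((a₁ * b₂ - a₂ * b₁ : ℤ) : ℝ)| :=
          Padic.one_le_norm_intCast_mul_abs hdet
      _ ≤ ε * (|(a₁ : ℝ)| * |(b₂ : ℝ)| + |(a₂ : ℝ)| * |(b₁ : ℝ)|) :=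
          mul_le_mul hnorm hcross (abs_nonneg _) ((norm_nonneg _).trans hnorm)

theorem exists_coprime_sqrt_mul_padicErr_le {x y : ℤ} (hx : x ≠ 0) (hy : y ≠ 0) :
    ∃ a b : ℤ, IsCoprime a b ∧ a ≠ 0 ∧ b ≠ 0 ∧ √|(a : ℝ) * b| ≤ √|(x : ℝ) * y| ∧
      √|(a : ℝ) * b| * padicErr ξ a b ≤ √|(x : ℝ) * y| * padicErr ξ x y := by
  obtain ⟨g, a, b, hg, hab, rfl, rfl⟩ := Int.exists_gcd_one' (Int.gcd_pos_of_ne_zero_left y hx)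
  have hg1 : (1 : ℝ) ≤ g := by exact_mod_cast hg
  have hsize : √|((a * g : ℤ) : ℝ) * (b * g : ℤ)| = g * √|(a : ℝ) * b| := by
    push_cast
    rw [show (a : ℝ) * g * (b * g) = g ^ 2 * (a * b) by ring, abs_mul, abs_sq,
      Real.sqrt_mul (sq_nonneg _), Real.sqrt_sq (by positivity)]
  have herr : padicErr ξ (a * g) (b * g) = ‖((g : ℤ) : ℚ_[p])‖ * padicErr ξ a b := by
    rw [padicErr, padicErr, ← norm_mul]
    push_cast; ring_nf
  have hnorm : 1 ≤ ‖((g : ℤ) : ℚ_[p])‖ * g := by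
    simpa using Padic.one_le_norm_intCast_mul_abs (p := p) (k := g) (by positivity)
  refine ⟨a, b, Int.isCoprime_iff_gcd_eq_one.mpr hab, left_ne_zero_of_mul hx,
    left_ne_zero_of_mul hy, ?_, ?_⟩
  · rw [hsize]; exact le_mul_of_one_le_left (Real.sqrt_nonneg _) hg1
  · rw [hsize, herr]
    calc √|(a : ℝ) * b| * padicErr ξ a b
        ≤ ‖((g : ℤ) : ℚ_[p])‖ * g * (√|(a : ℝ) * b| * padicErr ξ a b) :=
          le_mul_of_one_le_left (mul_nonneg (Real.sqrt_nonneg _) (norm_nonneg _)) hnorm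
      _ = _ := by ring

end Approximation

section CrossBounds
variable {q Q A B A' B' s t N ε σ : ℝ}

theorem le_two_mul_sq_of_one_le_mul_add (hN : 0 ≤ N) (hε : 0 ≤ ε) (hσ0 : 0 ≤ σ) (hA : 0 ≤ A)
    (hAB : A ≤ B) (hσB : σ * B ≤ q) (hqQ : q ≤ Q) (hNQ : 2 * N ≤ Q)
    (h : 1 ≤ N * ε * N * (A + B)) :
    σ ≤ 2 * (N * ε) * Q ^ 2 := by
  have hQ : 0 ≤ Q := by linarith
  have hσB0 : 0 ≤ σ * B := mul_nonneg hσ0 (hA.trans hAB)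
  calc σ ≤ σ * (N * ε * N * (A + B)) := le_mul_of_one_le_right hσ0 h
    _ ≤ σ * (N * ε * N * (2 * B)) := by gcongr; linarith
    _ = N * ε * (2 * N) * (σ * B) := by ring
    _ ≤ N * ε * Q * Q := by gcongr; linarith
    _ ≤ 2 * (N * ε) * Q ^ 2 := by nlinarith [mul_nonneg hN hε]

theorem le_two_mul_sq_of_cross_bounds_generic (hA : 0 ≤ A) (hB : 1 ≤ B) (hA' : 0 ≤ A')
    (hB' : 1 ≤ B') (hs : 1 ≤ s) (ht : 1 ≤ t) (hN : 0 ≤ N) (hq : 0 ≤ q)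
    (hAB : q ^ 2 = A * B) (hAB' : Q ^ 2 = A' * B') (hst : N ^ 2 = s * t)
    (hqQ : q ≤ Q) (hNQ : 2 * N ≤ Q) (hσ0 : 0 ≤ σ) (hσ1 : σ ≤ 1)
    (hσB : σ * B ≤ q) (hσB' : σ * B' ≤ Q)
    (hD : 1 ≤ ε * (A * B' + A' * B)) (h₀ : 1 ≤ ε * (s * B + A * t))
    (h₁ : 1 ≤ ε * (s * B' + A' * t)) :
    σ ≤ 2 * (N * ε) * Q ^ 2 := by
  have hε : 0 ≤ ε := (pos_of_mul_pos_left (one_pos.trans_le hD) (by positivity)).le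
  have hsN : s ≤ N ^ 2 := by nlinarith
  have htN : t ≤ N ^ 2 := by nlinarith
  have hsum (A B : ℝ) (hA : 0 ≤ A) (hB : 0 ≤ B) (h : 1 ≤ ε * (s * B + A * t)) :
      1 ≤ N * ε * N * (A + B) := by
    calc 1 ≤ ε * (s * B + A * t) := h
      _ ≤ ε * (N ^ 2 * B + A * N ^ 2) := by gcongr
      _ = N * ε * N * (A + B) := by ring
  rcases le_total A B with hAB₀ | hBA
  · exact le_two_mul_sq_of_one_le_mul_add hN hε hσ0 hA hAB₀ hσB hqQ hNQ
      (hsum A B hA (by linarith) h₀)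
  rcases le_total A' B' with hAB₁ | hBA'
  · exact le_two_mul_sq_of_one_le_mul_add hN hε hσ0 hA' hAB₁ hσB' le_rfl hNQ
      (hsum A' B' hA' (by linarith) h₁)
  set e := N * ε with he_def
  have he : 0 ≤ e := mul_nonneg hN hε
  have hQ : 0 ≤ Q := by linarith
  have h₀' : 1 ≤ e * N * (2 * A) := (hsum A B hA (by linarith) h₀).trans (by gcongr; linarith)
  have h₁' : 1 ≤ e * N * (2 * A') := (hsum A' B' hA' (by linarith) h₁).trans (by gcongr; linarith)
  have hNpos : 0 < N := hN.lt_of_ne (by rintro rfl; norm_num at h₀')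
  have hAq : A ≤ q ^ 2 := by nlinarith
  have hAQ : A' ≤ Q ^ 2 := by nlinarith
  -- multiply the two remaining determinant bounds against `hD`
  have hsq : N * 1 ≤ N * (2 * e * q * Q) ^ 2 := by
    calc N * 1 ≤ N * (ε * (A * B' + A' * B)) := by gcongr
      _ = e * (A * B') * 1 + e * (A' * B) * 1 := by ring
      _ ≤ e * (A * B') * (e * N * (2 * A')) + e * (A' * B) * (e * N * (2 * A)) := by
          gcongr
      _ = 2 * e ^ 2 * N * (A * Q ^ 2 + A' * q ^ 2) := by rw [hAB, hAB']; ring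
      _ ≤ 2 * e ^ 2 * N * (q ^ 2 * Q ^ 2 + Q ^ 2 * q ^ 2) := by gcongr
      _ = N * (2 * e * q * Q) ^ 2 := by ring
  have h1 : 1 ≤ 2 * e * q * Q := by
    have := le_of_mul_le_mul_left hsq hNpos
    nlinarith [mul_nonneg (mul_nonneg he hq) hQ]
  calc σ ≤ 2 * e * q * Q := hσ1.trans h1
    _ ≤ 2 * e * Q * Q := by gcongr
    _ = 2 * e * Q ^ 2 := by ring

theorem le_two_mul_sq_of_cross_bound_of_eq (hA : 0 ≤ A) (hB : 1 ≤ B) (hA' : 0 ≤ A')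
    (hB' : 1 ≤ B') (hq : 0 ≤ q) (hAB : q ^ 2 = A * B) (hAB' : Q ^ 2 = A' * B') (hqQ : q ≤ Q)
    (hσ0 : 0 ≤ σ) (hσB : σ * B ≤ q) (hσB' : σ * B' ≤ Q) (hD : 1 ≤ ε * (A * B' + A' * B)) :
    σ ≤ 2 * (q * ε) * Q ^ 2 := by
  have hε : 0 ≤ ε := (pos_of_mul_pos_left (one_pos.trans_le hD) (by positivity)).le
  have hAq : A ≤ q * Q := by nlinarith
  have hAQ : A' ≤ Q ^ 2 := by nlinarith
  calc σ ≤ σ * (ε * (A * B' + A' * B)) := le_mul_of_one_le_right hσ0 hD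
    _ = ε * (A * (σ * B') + A' * (σ * B)) := by ring
    _ ≤ ε * (q * Q * Q + Q ^ 2 * q) := by gcongr; linarith
    _ = 2 * (q * ε) * Q ^ 2 := by ring

theorem le_two_mul_sq_of_cross_bounds (hA : 1 ≤ A) (hB : 1 ≤ B) (hA' : 1 ≤ A') (hB' : 1 ≤ B')
    (hs : 1 ≤ s) (ht : 1 ≤ t) (hq : 0 ≤ q) (hN : 0 ≤ N)
    (hAB : q ^ 2 = A * B) (hAB' : Q ^ 2 = A' * B') (hst : N ^ 2 = s * t)
    (hqQ : q < Q) (hNQ : 2 * N ≤ Q) (hσ0 : 0 ≤ σ) (hσ1 : σ ≤ 1)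
    (hbal : σ * B ≤ q ∧ σ * B' ≤ Q ∨ σ * A ≤ q ∧ σ * A' ≤ Q)
    (hD : 1 ≤ ε * (A * B' + A' * B) ∨ q = Q) (h₀ : 1 ≤ ε * (s * B + A * t) ∨ N = q)
    (h₁ : 1 ≤ ε * (s * B' + A' * t) ∨ N = Q) :
    σ ≤ 2 * (N * ε) * Q ^ 2 := by
  replace hD := hD.resolve_right hqQ.ne
  replace h₁ := h₁.resolve_right (by linarith)
  rcases h₀ with h₀ | rfl
  · rcases hbal with ⟨hσB, hσB'⟩ | ⟨hσA, hσA'⟩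
    · exact le_two_mul_sq_of_cross_bounds_generic (by linarith) hB (by linarith) hB' hs ht hN hq
        hAB hAB' hst hqQ.le hNQ hσ0 hσ1 hσB hσB' hD h₀ h₁
    · exact le_two_mul_sq_of_cross_bounds_generic (A := B) (B := A) (A' := B') (B' := A')
        (s := t) (t := s) (by linarith) hA (by linarith) hA' ht hs hN hq (by linarith)
        (by linarith) (by linarith) hqQ.le hNQ hσ0 hσ1 hσA hσA' (by linarith) (by linarith)
        (by linarith)
  · rcases hbal with ⟨hσB, hσB'⟩ | ⟨hσA, hσA'⟩
    · exact le_two_mul_sq_of_cross_bound_of_eq (by linarith) hB (by linarith) hB' hq hAB hAB'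
        hqQ.le hσ0 hσB hσB' hD
    · exact le_two_mul_sq_of_cross_bound_of_eq (A := B) (B := A) (A' := B') (B' := A')
        (by linarith) hA (by linarith) hA' hq (by linarith) (by linarith) hqQ.le hσ0 hσA hσA'
        (by linarith)

end CrossBounds

theorem le_two_mul_sqrt_mul_padicErr_mul_sq {p : ℕ} [Fact p.Prime] (ξ : ℚ_[p])
    {x₀ y₀ x₁ y₁ a b : ℤ} {σ : ℝ} (hcop₀ : IsCoprime x₀ y₀) (hcop₁ : IsCoprime x₁ y₁)
    (hab : IsCoprime a b) (hx₀ : x₀ ≠ 0) (hy₀ : y₀ ≠ 0) (hx₁ : x₁ ≠ 0) (hy₁ : y₁ ≠ 0)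
    (ha : a ≠ 0) (hb : b ≠ 0) (hlt : √|(x₀ : ℝ) * y₀| < √|(x₁ : ℝ) * y₁|)
    (hsize : 2 * √|(a : ℝ) * b| ≤ √|(x₁ : ℝ) * y₁|)
    (he₀ : padicErr ξ x₀ y₀ ≤ padicErr ξ a b) (he₁ : padicErr ξ x₁ y₁ ≤ padicErr ξ a b)
    (hσ0 : 0 ≤ σ) (hσ1 : σ ≤ 1)
    (hbal : σ * |(y₀ : ℝ)| ≤ √|(x₀ : ℝ) * y₀| ∧ σ * |(y₁ : ℝ)| ≤ √|(x₁ : ℝ) * y₁| ∨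
      σ * |(x₀ : ℝ)| ≤ √|(x₀ : ℝ) * y₀| ∧ σ * |(x₁ : ℝ)| ≤ √|(x₁ : ℝ) * y₁|) :
    σ ≤ 2 * (√|(a : ℝ) * b| * padicErr ξ a b) * √|(x₁ : ℝ) * y₁| ^ 2 := by
  have hone {u : ℤ} (hu : u ≠ 0) : 1 ≤ |(u : ℝ)| := by
    rw [← Int.cast_abs]; exact_mod_cast Int.one_le_abs hu
  have hsq (u v : ℤ) : √|(u : ℝ) * v| ^ 2 = |(u : ℝ)| * |(v : ℝ)| := by
    rw [Real.sq_sqrt (abs_nonneg _), abs_mul]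
  exact le_two_mul_sq_of_cross_bounds (hone hx₀) (hone hy₀) (hone hx₁) (hone hy₁) (hone ha)
    (hone hb) (Real.sqrt_nonneg _) (Real.sqrt_nonneg _) (hsq _ _) (hsq _ _) (hsq _ _) hlt hsize
    hσ0 hσ1 hbal (one_le_mul_cross_or_sqrt_eq ξ hcop₀ hcop₁ he₀ he₁)
    (one_le_mul_cross_or_sqrt_eq ξ hab hcop₀ le_rfl he₀)
    (one_le_mul_cross_or_sqrt_eq ξ hab hcop₁ le_rfl he₁)

theorem Real.sqrt_mul_le_sqrt_mul_of_mul_le {c u v : ℝ} (hc : 0 ≤ c) (hv : 0 ≤ v)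
    (h : c * v ≤ u) : √c * v ≤ √(u * v) := by
  calc √c * v = √(c * v * v) := by rw [mul_assoc, Real.sqrt_mul hc, Real.sqrt_mul_self hv]
    _ ≤ √(u * v) := Real.sqrt_le_sqrt (mul_le_mul_of_nonneg_right h hv)

theorem exists_frequently_balanced {x y : ℕ → ℤ}
    (hyp : (∃ c : ℝ, 0 < c ∧ ∀ N : ℕ, ∃ k ≥ N,
        c * |(y k : ℝ)| ≤ |(x k : ℝ)| ∧ c * |(y (k + 1) : ℝ)| ≤ |(x (k + 1) : ℝ)|) ∨
      (∃ c : ℝ, 0 < c ∧ ∀ N : ℕ, ∃ k ≥ N,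
        |(x k : ℝ)| ≤ c * |(y k : ℝ)| ∧ |(x (k + 1) : ℝ)| ≤ c * |(y (k + 1) : ℝ)|)) :
    ∃ σ : ℝ, 0 < σ ∧ σ ≤ 1 ∧ ∃ᶠ k in atTop,
      σ * |(y k : ℝ)| ≤ √|(x k : ℝ) * y k| ∧
        σ * |(y (k + 1) : ℝ)| ≤ √|(x (k + 1) : ℝ) * y (k + 1)| ∨
      σ * |(x k : ℝ)| ≤ √|(x k : ℝ) * y k| ∧
        σ * |(x (k + 1) : ℝ)| ≤ √|(x (k + 1) : ℝ) * y (k + 1)| := by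
  have hmin {c : ℝ} (hc : 0 < c) {u v : ℝ} (h : c * |v| ≤ |u|) :
      min √c 1 * |v| ≤ √|u * v| := by
    rw [abs_mul]
    exact (mul_le_mul_of_nonneg_right (min_le_left _ _) (abs_nonneg v)).trans
      (Real.sqrt_mul_le_sqrt_mul_of_mul_le hc.le (abs_nonneg v) h)
  rcases hyp with ⟨c, hc, h⟩ | ⟨c, hc, h⟩
  · refine ⟨min √c 1, by positivity, min_le_right _ _, frequently_atTop.mpr fun N => ?_⟩
    obtain ⟨k, hk, h₀, h₁⟩ := h N
    exact ⟨k, hk, Or.inl ⟨hmin hc h₀, hmin hc h₁⟩⟩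
  · refine ⟨min √c⁻¹ 1, by positivity, min_le_right _ _, frequently_atTop.mpr fun N => ?_⟩
    obtain ⟨k, hk, h₀, h₁⟩ := h N
    have hswap {u v : ℝ} (h : |u| ≤ c * |v|) : min √c⁻¹ 1 * |u| ≤ √|u * v| :=
      mul_comm u v ▸ hmin (inv_pos.mpr hc) ((inv_mul_le_iff₀ hc).mpr h)
    exact ⟨k, hk, Or.inr ⟨hswap h₀, hswap h₁⟩⟩

theorem not_eventually_exists_of_frequently_balanced {p : ℕ} [Fact p.Prime] (ξ : ℚ_[p])
    {x y : ℕ → ℤ} {Q : ℕ → ℝ}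
    (hQ : ∀ k, Q k = √|(x k : ℝ) * y k|)
    (hcop : ∀ k, IsCoprime (x k) (y k))
    (hne : ∀ k, x k ≠ 0 ∧ y k ≠ 0)
    (hmono : StrictMono Q)
    (htend : Tendsto Q atTop atTop)
    (hdec : StrictAnti fun k => padicErr ξ (x k) (y k))
    (hbest : ∀ k, ∀ a b : ℤ, IsCoprime a b → a ≠ 0 → b ≠ 0 →
      √|(a : ℝ) * b| < Q (k + 1) → padicErr ξ (x k) (y k) ≤ padicErr ξ a b)
    {σ : ℝ} (hσ0 : 0 < σ) (hσ1 : σ ≤ 1)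
    (hfreq : ∃ᶠ k in atTop,
      σ * |(y k : ℝ)| ≤ √|(x k : ℝ) * y k| ∧
        σ * |(y (k + 1) : ℝ)| ≤ √|(x (k + 1) : ℝ) * y (k + 1)| ∨
      σ * |(x k : ℝ)| ≤ √|(x k : ℝ) * y k| ∧
        σ * |(x (k + 1) : ℝ)| ≤ √|(x (k + 1) : ℝ) * y (k + 1)|)
    {m : ℝ} (hm : 3 < m) :
    ¬ ∀ᶠ X : ℝ in atTop, ∃ u v : ℤ, 0 < √|(u : ℝ) * v| ∧ √|(u : ℝ) * v| ≤ X ∧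
      ‖(v : ℚ_[p]) * ξ - u‖ ≤ X ^ (-m) := by
  intro hsol
  have hsmall : ∀ᶠ X : ℝ in atTop, 8 * X ^ (3 - m) < σ := by
    have h := (tendsto_rpow_neg_atTop (by linarith : 0 < m - 3)).const_mul 8
    rw [mul_zero, neg_sub] at h
    exact h.eventually (gt_mem_nhds hσ0)
  have hX : Tendsto (fun k => Q (k + 1) / 2) atTop atTop :=
    (htend.comp (tendsto_add_atTop_nat 1)).atTop_div_const two_pos
  obtain ⟨K, hbal, ⟨u, v, hpos, hle, herr⟩, hK⟩ :=
    (hfreq.and_eventually (hX.eventually (hsol.and hsmall))).exists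
  set X := Q (K + 1) / 2 with hX_def
  have hX0 : 0 < X := hpos.trans_le hle
  obtain ⟨a, b, hab, ha, hb, hNle, hNerr⟩ := exists_coprime_sqrt_mul_padicErr_le ξ (x := u)
    (y := v) (by rintro rfl; simp at hpos) (by rintro rfl; simp at hpos)
  have he₀ : padicErr ξ (x K) (y K) ≤ padicErr ξ a b :=
    hbest K a b hab ha hb (by linarith)
  have hkey := le_two_mul_sqrt_mul_padicErr_mul_sq ξ (hcop K) (hcop (K + 1)) hab (hne K).1
    (hne K).2 (hne (K + 1)).1 (hne (K + 1)).2 ha hb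
    (by rw [← hQ, ← hQ]; exact hmono K.lt_succ_self) (by rw [← hQ]; linarith) he₀
    ((hdec K.lt_succ_self).le.trans he₀) hσ0.le hσ1 hbal
  rw [← hQ, show Q (K + 1) = 2 * X by rw [hX_def]; ring] at hkey
  have hεX : √|(a : ℝ) * b| * padicErr ξ a b ≤ X * X ^ (-m) :=
    hNerr.trans (mul_le_mul hle herr (norm_nonneg _) hX0.le)
  refine lt_irrefl σ ?_
  calc σ ≤ 2 * (√|(a : ℝ) * b| * padicErr ξ a b) * (2 * X) ^ 2 := hkey
    _ ≤ 2 * (X * X ^ (-m)) * (2 * X) ^ 2 := by gcongr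
    _ = 8 * X ^ (3 - m) := by
        rw [Real.rpow_sub hX0, Real.rpow_neg hX0.le, Real.rpow_ofNat]
        field_simp
        ring
    _ < σ := hK

theorem statement17_general (p : ℕ) [Fact p.Prime] (ξ : ℚ_[p])
    (x y : ℕ → ℤ) (Q : ℕ → ℝ)
    (hQ : ∀ k, Q k = Real.sqrt |(x k : ℝ) * (y k : ℝ)|)
    (hcop : ∀ k, IsCoprime (x k) (y k))
    (hne : ∀ k, x k ≠ 0 ∧ y k ≠ 0)
    (hmono : StrictMono Q)
    (htend : Tendsto Q atTop atTop)
    (hdec : StrictAnti fun k => ‖(y k : ℚ_[p]) * ξ - (x k : ℚ_[p])‖)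
    (hbest : ∀ k, ∀ a b : ℤ, IsCoprime a b → a ≠ 0 → b ≠ 0 →
      Real.sqrt |(a : ℝ) * (b : ℝ)| < Q (k + 1) →
      ‖(y k : ℚ_[p]) * ξ - (x k : ℚ_[p])‖ ≤ ‖(b : ℚ_[p]) * ξ - (a : ℚ_[p])‖)
    (hyp :
      (∃ c : ℝ, 0 < c ∧ ∀ N : ℕ, ∃ k ≥ N,
        c * |(y k : ℝ)| ≤ |(x k : ℝ)| ∧ c * |(y (k + 1) : ℝ)| ≤ |(x (k + 1) : ℝ)|) ∨
      (∃ c : ℝ, 0 < c ∧ ∀ N : ℕ, ∃ k ≥ N,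
        |(x k : ℝ)| ≤ c * |(y k : ℝ)| ∧ |(x (k + 1) : ℝ)| ≤ c * |(y (k + 1) : ℝ)|)) :
    muHatTimesExp p ξ ≤ 3 := by
  obtain ⟨σ, hσ0, hσ1, hfreq⟩ := exists_frequently_balanced hyp
  refine sSup_le ?_
  rintro _ ⟨m, hm, rfl⟩
  refine ENNReal.ofReal_le_of_le_toReal ?_
  by_contra! h3
  exact not_eventually_exists_of_frequently_balanced ξ hQ hcop hne hmono htend hdec hbest hσ0 hσ1
    hfreq (by simpa using h3) hm

/-- Let `(x_k, y_k)` be a sequence of multiplicative best approximations to an irrational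
`ξ ∈ ℚ_p`. If (i) for some `c > 0` there are infinitely many `k` with `|x_k| ≥ c|y_k|` and
`|x_{k+1}| ≥ c|y_{k+1}|`, or (ii) for some `c > 0` there are infinitely many `k` with
`|x_k| ≤ c|y_k|` and `|x_{k+1}| ≤ c|y_{k+1}|`, then `μ̂×(ξ) ≤ 3`. -/
theorem statement17 (p : ℕ) [Fact p.Prime] (ξ : ℚ_[p]) (hξ : PadicIrrational p ξ)
    (x y : ℕ → ℤ) (Q : ℕ → ℝ)
    (hQ : ∀ k, Q k = Real.sqrt |(x k : ℝ) * (y k : ℝ)|)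
    (hcop : ∀ k, IsCoprime (x k) (y k))
    (hne : ∀ k, x k ≠ 0 ∧ y k ≠ 0)
    (hmono : StrictMono Q)
    (htend : Tendsto Q atTop atTop)
    (hdec : StrictAnti fun k => ‖(y k : ℚ_[p]) * ξ - (x k : ℚ_[p])‖)
    (hbest : ∀ k, ∀ a b : ℤ, IsCoprime a b → a ≠ 0 → b ≠ 0 →
      Real.sqrt |(a : ℝ) * (b : ℝ)| < Q (k + 1) →
      ‖(y k : ℚ_[p]) * ξ - (x k : ℚ_[p])‖ ≤ ‖(b : ℚ_[p]) * ξ - (a : ℚ_[p])‖)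
    (hyp :
      (∃ c : ℝ, 0 < c ∧ ∀ N : ℕ, ∃ k ≥ N,
        c * |(y k : ℝ)| ≤ |(x k : ℝ)| ∧ c * |(y (k + 1) : ℝ)| ≤ |(x (k + 1) : ℝ)|) ∨
      (∃ c : ℝ, 0 < c ∧ ∀ N : ℕ, ∃ k ≥ N,
        |(x k : ℝ)| ≤ c * |(y k : ℝ)| ∧ |(x (k + 1) : ℝ)| ≤ c * |(y (k + 1) : ℝ)|)) :
    muHatTimesExp p ξ ≤ 3 :=
  statement17_general p ξ x y Q hQ hcop hne hmono htend hdec hbest hyp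
end
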